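/- Let γ ∈ ℝ and suppose the system x(n+1) = L(n)x_n + f(n) has bounded delay of order d. Then the homogeneous system is uniformly stable in X with respect to B^γ if and only if the nonhomogeneous system is (ℓ^1,ℓ^∞)-stable. -/

import Mathlib

open scoped ENNReal
open MeasureTheory

namespace BP

variable {X : Type*} [NormedAddCommGroup X] [NormedSpace ℝ X] [CompleteSpace X]

/-- Weighted coordinate size: index `k : ℕ` represents the coordinate `−k ≤ 0`,
so the weight `e^{γ m}` becomes `e^{−γ k}`. -/
noncomputable def wnorm (γ : ℝ) (φ : ℕ → X) (k : ℕ) : ℝ := ‖φ k‖ * Real.exp (-(γ * k))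

/-- Membership in the phase space `B^γ`. -/
def MemB (γ : ℝ) (φ : ℕ → X) : Prop := BddAbove (Set.range (wnorm γ φ))

/-- The `B^γ` norm `|φ|_{B^γ} = sup_{m ≤ 0} ‖φ(m)‖ e^{γ m}`. -/
noncomputable def Bnorm (γ : ℝ) (φ : ℕ → X) : ℝ := ⨆ k, wnorm γ φ k

/-- The history `x_n` of `x : ℤ → X` at time `n` : coordinate `−k` is `x (n − k)`. -/
def hist (x : ℤ → X) (n : ℤ) : ℕ → X := fun k => x (n - k)

/-- `x = x(·, τ, φ; f)` is the solution of `x(n+1) = L(n) x_n + f(n)` (`n ≥ τ`), `x_τ = φ`. -/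
def IsSolution (L : ℕ → ((ℕ → X) →ₗ[ℝ] X)) (f : ℕ → X) (τ : ℕ) (φ : ℕ → X)
    (x : ℤ → X) : Prop :=
  (∀ k : ℕ, x ((τ : ℤ) - k) = φ k) ∧
  (∀ n : ℕ, τ ≤ n → x ((n : ℤ) + 1) = L n (hist x (n : ℤ)) + f n)

/-- Restriction of `x : ℤ → X` to `ℤ≥0`. -/
def restrict (x : ℤ → X) : ℕ → X := fun n => x (n : ℤ)

/-- The `ℓ^p(ℤ≥0, X)` norm (valued in `ℝ≥0∞`). -/
noncomputable def lpNorm (p : ℝ≥0∞) {E : Type*} [NormedAddCommGroup E] (f : ℕ → E) : ℝ≥0∞ :=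
  eLpNorm f p Measure.count

/-- `L(n)` is a bounded operator from `B^γ` to `X`. -/
def OpBounded (γ : ℝ) (T : (ℕ → X) →ₗ[ℝ] X) : Prop :=
  ∃ C : ℝ, ∀ φ : ℕ → X, MemB γ φ → ‖T φ‖ ≤ C * Bnorm γ φ

/-- The projection `P_{[−∞,−j]}` : keeps coordinates `−k` with `k ≥ j`. -/
def Ptail (j : ℕ) : (ℕ → X) →ₗ[ℝ] (ℕ → X) where
  toFun φ := fun k => if j ≤ k then φ k else 0
  map_add' φ ψ := by funext k; by_cases h : j ≤ k <;> simp [h]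
  map_smul' c φ := by funext k; by_cases h : j ≤ k <;> simp [h]

/-- The projection `P_{[−j,0]}` : keeps coordinates `−k` with `k ≤ j`. -/
def Phead (j : ℕ) : (ℕ → X) →ₗ[ℝ] (ℕ → X) where
  toFun φ := fun k => if k ≤ j then φ k else 0
  map_add' φ ψ := by funext k; by_cases h : k ≤ j <;> simp [h]
  map_smul' c φ := by funext k; by_cases h : k ≤ j <;> simp [h]

/-- `E_{−j} : X → B^γ`, placing `ψ` at coordinate `−j`. -/
def Ecoord (j : ℕ) : X →ₗ[ℝ] (ℕ → X) where
  toFun ψ := fun k => if k = j then ψ else 0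
  map_add' ψ χ := by funext k; by_cases h : k = j <;> simp [h]
  map_smul' c ψ := by funext k; by_cases h : k = j <;> simp [h]

/-- The backward shift `S`. -/
def shiftS : (ℕ → X) →ₗ[ℝ] (ℕ → X) where
  toFun φ := fun k => if k = 0 then 0 else φ (k - 1)
  map_add' φ ψ := by funext k; by_cases h : k = 0 <;> simp [h]
  map_smul' c φ := by funext k; by_cases h : k = 0 <;> simp [h]

/-- `D(n) = E₀ ∘ L(n) + S`. -/
def Dop (L : ℕ → ((ℕ → X) →ₗ[ℝ] X)) (n : ℕ) : (ℕ → X) →ₗ[ℝ] (ℕ → X) :=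
  (Ecoord 0).comp (L n) + shiftS

/-- `h = H g`, `h(n) = Σ_{k=0}^{n−1} S^{n−k−1} (I − P₀) g(k)`. -/
noncomputable def Hop (g : ℕ → (ℕ → X)) : ℕ → (ℕ → X) :=
  fun n => ∑ k ∈ Finset.range n,
    ((shiftS ^ (n - k - 1) : (ℕ → X) →ₗ[ℝ] (ℕ → X))
      ((LinearMap.id - Phead 0 : (ℕ → X) →ₗ[ℝ] (ℕ → X)) (g k)))

/-- `(ℓ^p, ℓ^q)`-stability of the nonhomogeneous system. -/
def lplqStable (L : ℕ → ((ℕ → X) →ₗ[ℝ] X)) (p q : ℝ≥0∞) : Prop :=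
  ∀ f : ℕ → X, lpNorm p f < ∞ → ∀ x : ℤ → X, IsSolution L f 0 0 x →
    lpNorm q (restrict x) < ∞

/-- Uniform exponential stability in `X` w.r.t. `B^γ`. -/
def UESinX (γ : ℝ) (L : ℕ → ((ℕ → X) →ₗ[ℝ] X)) : Prop :=
  ∃ K : ℝ, 1 ≤ K ∧ ∃ ν : ℝ, 0 < ν ∧
    ∀ (τ : ℕ) (φ : ℕ → X), MemB γ φ → ∀ x : ℤ → X, IsSolution L 0 τ φ x →
      ∀ n : ℕ, τ ≤ n → ‖x (n : ℤ)‖ ≤ K * Real.exp (-(ν * ((n : ℝ) - (τ : ℝ)))) * Bnorm γ φ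

/-- Uniform exponential stability in `B^γ`. -/
def UESinB (γ : ℝ) (L : ℕ → ((ℕ → X) →ₗ[ℝ] X)) : Prop :=
  ∃ K : ℝ, 1 ≤ K ∧ ∃ ν : ℝ, 0 < ν ∧
    ∀ (τ : ℕ) (φ : ℕ → X), MemB γ φ → ∀ x : ℤ → X, IsSolution L 0 τ φ x →
      ∀ n : ℕ, τ ≤ n →
        Bnorm γ (hist x (n : ℤ)) ≤ K * Real.exp (-(ν * ((n : ℝ) - (τ : ℝ)))) * Bnorm γ φ

/-- Uniform stability in `X` w.r.t. `B^γ`. -/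
def USinX (γ : ℝ) (L : ℕ → ((ℕ → X) →ₗ[ℝ] X)) : Prop :=
  ∃ K : ℝ, 1 ≤ K ∧
    ∀ (τ : ℕ) (φ : ℕ → X), MemB γ φ → ∀ x : ℤ → X, IsSolution L 0 τ φ x →
      ∀ n : ℕ, τ ≤ n → ‖x (n : ℤ)‖ ≤ K * Bnorm γ φ

/-- Uniform stability in `B^γ`. -/
def USinB (γ : ℝ) (L : ℕ → ((ℕ → X) →ₗ[ℝ] X)) : Prop :=
  ∃ K : ℝ, 1 ≤ K ∧
    ∀ (τ : ℕ) (φ : ℕ → X), MemB γ φ → ∀ x : ℤ → X, IsSolution L 0 τ φ x →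
      ∀ n : ℕ, τ ≤ n → Bnorm γ (hist x (n : ℤ)) ≤ K * Bnorm γ φ

/-- Condition (★): there exists `m ≤ 0` (here `m = −j`, `j : ℕ`) such that
`sup_{n ≥ 0} ‖L(n) P_{[−∞,m]}‖_{B^γ→X} < ∞`. -/
def StarCond (γ : ℝ) (L : ℕ → ((ℕ → X) →ₗ[ℝ] X)) : Prop :=
  ∃ (j : ℕ) (C : ℝ), ∀ (n : ℕ) (φ : ℕ → X), MemB γ φ → ‖L n (Ptail j φ)‖ ≤ C * Bnorm γ φ

/-- `z` solves the first order system `z(n+1) = A(n) z(n)` (`n ≥ τ`), `z(τ) = ψ`. -/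
def IsFOSol (A : ℕ → ((ℕ → X) →ₗ[ℝ] (ℕ → X))) (τ : ℕ) (ψ : ℕ → X)
    (z : ℕ → (ℕ → X)) : Prop :=
  z τ = ψ ∧ ∀ n : ℕ, τ ≤ n → z (n + 1) = A n (z n)

/-- Uniform exponential stability of the first order system in `B^γ`. -/
def FOUES (γ : ℝ) (A : ℕ → ((ℕ → X) →ₗ[ℝ] (ℕ → X))) : Prop :=
  ∃ K : ℝ, 1 ≤ K ∧ ∃ ν : ℝ, 0 < ν ∧
    ∀ (τ : ℕ) (ψ : ℕ → X), MemB γ ψ → ∀ z : ℕ → (ℕ → X), IsFOSol A τ ψ z →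
      ∀ n : ℕ, τ ≤ n →
        Bnorm γ (z n) ≤ K * Real.exp (-(ν * ((n : ℝ) - (τ : ℝ)))) * Bnorm γ ψ

/-- Uniform stability of the first order system in `B^γ`. -/
def FOUS (γ : ℝ) (A : ℕ → ((ℕ → X) →ₗ[ℝ] (ℕ → X))) : Prop :=
  ∃ K : ℝ, 1 ≤ K ∧
    ∀ (τ : ℕ) (ψ : ℕ → X), MemB γ ψ → ∀ z : ℕ → (ℕ → X), IsFOSol A τ ψ z →
      ∀ n : ℕ, τ ≤ n → Bnorm γ (z n) ≤ K * Bnorm γ ψ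

/-- The associated subdiagonal system: `L_sub(0) = 0`, `L_sub(n) = L(n) P_{[−n+1,0]}`. -/
def Lsub (L : ℕ → ((ℕ → X) →ₗ[ℝ] X)) : ℕ → ((ℕ → X) →ₗ[ℝ] X) :=
  fun n => if n = 0 then 0 else (L n).comp (Phead (n - 1))

/-- The system has bounded delay of order `d`. -/
def BoundedDelay (L : ℕ → ((ℕ → X) →ₗ[ℝ] X)) (d : ℕ) : Prop :=
  ∀ n : ℕ, ∃ A : Fin d → (X →L[ℝ] X), ∀ φ : ℕ → X, L n φ = ∑ k : Fin d, A k (φ k)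

set_option linter.unusedSectionVars false

def sol (L : ℕ → ((ℕ → X) →ₗ[ℝ] X)) (f : ℕ → X) : ℕ → X
  | 0 => 0
  | n + 1 => L n (fun k => if k ≤ n then sol L f (n - k) else 0) + f n
  termination_by n => n
  decreasing_by exact Nat.lt_succ_of_le (Nat.sub_le n k)

lemma sol_zero (L : ℕ → ((ℕ → X) →ₗ[ℝ] X)) (f : ℕ → X) : sol L f 0 = 0 := by rw [sol]

lemma sol_succ (L : ℕ → ((ℕ → X) →ₗ[ℝ] X)) (f : ℕ → X) (n : ℕ) :
    sol L f (n+1) = L n (fun k => if k ≤ n then sol L f (n - k) else 0) + f n := by rw [sol]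

def solZ (L : ℕ → ((ℕ → X) →ₗ[ℝ] X)) (f : ℕ → X) : ℤ → X :=
  fun m => if 0 ≤ m then sol L f m.toNat else 0

lemma solZ_coe (L : ℕ → ((ℕ → X) →ₗ[ℝ] X)) (f : ℕ → X) (n : ℕ) :
    solZ L f (n : ℤ) = sol L f n := by simp [solZ]

lemma hist_solZ (L : ℕ → ((ℕ → X) →ₗ[ℝ] X)) (f : ℕ → X) (n : ℕ) :
    hist (solZ L f) (n : ℤ) = fun k => if k ≤ n then sol L f (n - k) else 0 := by
  funext k
  simp only [hist, solZ]
  by_cases h : k ≤ n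
  · rw [if_pos h, if_pos (by omega), show ((n : ℤ) - k).toNat = n - k by omega]
  · rw [if_neg h, if_neg (by omega)]

lemma isSolution_solZ (L : ℕ → ((ℕ → X) →ₗ[ℝ] X)) (f : ℕ → X) :
    IsSolution L f 0 0 (solZ L f) := by
  constructor
  · intro k
    simp only [solZ, Pi.zero_apply]
    split_ifs with h
    · have hk : k = 0 := by omega
      subst hk
      norm_num [sol_zero]
    · rfl
  · intro n _
    rw [show (n:ℤ) + 1 = ((n+1 : ℕ) : ℤ) by push_cast; ring, solZ_coe, sol_succ,
      hist_solZ]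

lemma isSolution_unique {L : ℕ → ((ℕ → X) →ₗ[ℝ] X)} {f : ℕ → X} {x : ℤ → X}
    (hx : IsSolution L f 0 0 x) : ∀ n : ℕ, x (n : ℤ) = sol L f n := by
  intro n
  induction n using Nat.strong_induction_on with
  | _ n ih =>
    match n with
    | 0 =>
      have := hx.1 0
      simpa [sol_zero] using this
    | n + 1 =>
      have h2 := hx.2 n (Nat.zero_le n)
      have hh : hist x (n : ℤ) = fun k => if k ≤ n then sol L f (n - k) else 0 := by
        funext k
        simp only [hist]
        by_cases h : k ≤ n
        · rw [if_pos h, show (n:ℤ) - k = ((n - k : ℕ) : ℤ) by omega]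
          exact ih (n - k) (by omega)
        · rw [if_neg h, show (n:ℤ) - k = ((0:ℕ):ℤ) - ((k - n : ℕ) : ℤ) by omega, hx.1 (k-n)]
          rfl
      rw [show ((n+1 : ℕ) : ℤ) = (n:ℤ) + 1 by push_cast; ring, h2, hh, sol_succ]

lemma sol_add (L : ℕ → ((ℕ → X) →ₗ[ℝ] X)) (f g : ℕ → X) (n : ℕ) :
    sol L (f + g) n = sol L f n + sol L g n := by
  induction n using Nat.strong_induction_on with
  | _ n ih =>
    match n with
    | 0 => simp [sol_zero]
    | n + 1 =>
      rw [sol_succ, sol_succ, sol_succ]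
      have : (fun k => if k ≤ n then sol L (f + g) (n - k) else 0)
          = (fun k => if k ≤ n then sol L f (n - k) else 0)
            + (fun k => if k ≤ n then sol L g (n - k) else 0) := by
        funext k
        by_cases h : k ≤ n
        · simp only [Pi.add_apply, if_pos h]; exact ih (n - k) (by omega)
        · simp [if_neg h]
      rw [this, map_add]
      simp only [Pi.add_apply]
      abel

lemma sol_smul (L : ℕ → ((ℕ → X) →ₗ[ℝ] X)) (c : ℝ) (f : ℕ → X) (n : ℕ) :
    sol L (c • f) n = c • sol L f n := by
  induction n using Nat.strong_induction_on with
  | _ n ih =>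
    match n with
    | 0 => simp [sol_zero]
    | n + 1 =>
      rw [sol_succ, sol_succ]
      have : (fun k => if k ≤ n then sol L (c • f) (n - k) else 0)
          = c • (fun k => if k ≤ n then sol L f (n - k) else 0) := by
        funext k
        by_cases h : k ≤ n
        · simp only [Pi.smul_apply, if_pos h]; exact ih (n - k) (by omega)
        · simp [if_neg h]
      rw [this, _root_.map_smul]
      simp [smul_add]

/-- `sol L · n` as a linear map. -/
def solLM (L : ℕ → ((ℕ → X) →ₗ[ℝ] X)) (n : ℕ) : (ℕ → X) →ₗ[ℝ] X where
  toFun f := sol L f n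
  map_add' f g := sol_add L f g n
  map_smul' c f := sol_smul L c f n

lemma sol_congr (L : ℕ → ((ℕ → X) →ₗ[ℝ] X)) {f g : ℕ → X} (n : ℕ)
    (h : ∀ k < n, f k = g k) : sol L f n = sol L g n := by
  induction n using Nat.strong_induction_on with
  | _ n ih =>
    match n with
    | 0 => simp [sol_zero]
    | n + 1 =>
      rw [sol_succ, sol_succ, h n (by omega)]
      congr 1
      congr 1
      funext k
      by_cases hk : k ≤ n
      · rw [if_pos hk, if_pos hk, ih (n - k) (by omega) (fun j hj => h j (by omega))]
      · rw [if_neg hk, if_neg hk]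


/-- delta function at `k`. -/
def dlt (k : ℕ) (v : X) : ℕ → X := fun m => if m = k then v else 0

lemma wnorm_le_Bnorm {γ : ℝ} {φ : ℕ → X} (h : MemB γ φ) (k : ℕ) :
    wnorm γ φ k ≤ Bnorm γ φ := le_ciSup h k

lemma Bnorm_nonneg {γ : ℝ} {φ : ℕ → X} (h : MemB γ φ) : 0 ≤ Bnorm γ φ :=
  le_trans (mul_nonneg (norm_nonneg _) (Real.exp_pos _).le) (wnorm_le_Bnorm h 0)

lemma norm_le_exp_mul_Bnorm {γ : ℝ} {φ : ℕ → X} (h : MemB γ φ) (k : ℕ) :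
    ‖φ k‖ ≤ Real.exp (γ * k) * Bnorm γ φ := by
  have h1 := wnorm_le_Bnorm h k
  have h2 : wnorm γ φ k = ‖φ k‖ * Real.exp (-(γ * k)) := rfl
  rw [h2] at h1
  have h3 : (0:ℝ) < Real.exp (-(γ * k)) := Real.exp_pos _
  calc ‖φ k‖ = (‖φ k‖ * Real.exp (-(γ * k))) * Real.exp (γ * k) := by
        rw [mul_assoc, ← Real.exp_add]; simp
    _ ≤ Bnorm γ φ * Real.exp (γ * k) := by
        apply mul_le_mul_of_nonneg_right h1 (Real.exp_pos _).le
    _ = Real.exp (γ * k) * Bnorm γ φ := mul_comm _ _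

lemma memB_dlt (γ : ℝ) (k : ℕ) (v : X) : MemB γ (dlt k v) := by
  refine ⟨max (‖v‖ * Real.exp (-(γ * k))) 0, ?_⟩
  rintro y ⟨j, rfl⟩
  by_cases h : j = k
  · subst h
    have : wnorm γ (dlt j v) j = ‖v‖ * Real.exp (-(γ * j)) := by simp [wnorm, dlt]
    rw [this]; exact le_max_left _ _
  · have : wnorm γ (dlt k v) j = 0 := by simp [wnorm, dlt, h]
    rw [this]; exact le_max_right _ _

lemma Bnorm_dlt_zero (γ : ℝ) (v : X) : Bnorm γ (dlt 0 v) = ‖v‖ := by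
  apply le_antisymm
  · apply ciSup_le
    intro k
    by_cases h : k = 0
    · subst h; simp [wnorm, dlt]
    · simp [wnorm, dlt, h, norm_nonneg]
  · have := le_ciSup (memB_dlt γ 0 v) 0
    calc ‖v‖ = wnorm γ (dlt 0 v) 0 := by simp [wnorm, dlt]
      _ ≤ Bnorm γ (dlt 0 v) := this

lemma sol_dlt_eq_zero (L : ℕ → ((ℕ → X) →ₗ[ℝ] X)) (k : ℕ) (v : X) :
    ∀ m : ℕ, m ≤ k → sol L (dlt k v) m = 0 := by
  intro m
  induction m using Nat.strong_induction_on with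
  | _ m ih =>
    match m with
    | 0 => intro _; exact sol_zero L _
    | m + 1 =>
      intro hm
      rw [sol_succ]
      have h1 : (fun j => if j ≤ m then sol L (dlt k v) (m - j) else 0) = (0 : ℕ → X) := by
        funext j
        by_cases h : j ≤ m
        · simp only [if_pos h, Pi.zero_apply]
          exact ih (m - j) (by omega) (by omega)
        · simp [if_neg h]
      rw [h1, map_zero, zero_add, dlt, if_neg (by omega)]

lemma sol_dlt_succ (L : ℕ → ((ℕ → X) →ₗ[ℝ] X)) (k : ℕ) (v : X) :
    sol L (dlt k v) (k + 1) = v := by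
  rw [sol_succ]
  have h1 : (fun j => if j ≤ k then sol L (dlt k v) (k - j) else 0) = (0 : ℕ → X) := by
    funext j
    by_cases h : j ≤ k
    · simp only [if_pos h, Pi.zero_apply]
      exact sol_dlt_eq_zero L k v (k - j) (by omega)
    · simp [if_neg h]
  rw [h1, map_zero, zero_add, dlt, if_pos rfl]

/-- The solution generated by a delta forcing at time `k` is a homogeneous solution
starting at `k+1` from the initial history `dlt 0 v`. -/
lemma isSolution_shift (L : ℕ → ((ℕ → X) →ₗ[ℝ] X)) (k : ℕ) (v : X) :
    IsSolution L 0 (k + 1) (dlt 0 v) (solZ L (dlt k v)) := by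
  constructor
  · intro m
    by_cases hm : m = 0
    · subst hm
      rw [show ((k + 1 : ℕ) : ℤ) - (0:ℕ) = ((k+1 : ℕ) : ℤ) by push_cast; ring, solZ_coe,
        sol_dlt_succ, dlt, if_pos rfl]
    · rw [dlt, if_neg hm]
      by_cases hm2 : m ≤ k + 1
      · rw [show ((k + 1 : ℕ) : ℤ) - (m:ℤ) = ((k + 1 - m : ℕ) : ℤ) by omega, solZ_coe]
        exact sol_dlt_eq_zero L k v _ (by omega)
      · simp only [solZ]
        rw [if_neg (by omega)]
  · intro n hn
    rw [show (n:ℤ) + 1 = ((n+1 : ℕ) : ℤ) by push_cast; ring, solZ_coe, sol_succ,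
      hist_solZ, dlt, if_neg (by omega), Pi.zero_apply]

lemma lpNorm_one_eq (f : ℕ → X) : lpNorm 1 f = ∑' k, (‖f k‖₊ : ℝ≥0∞) := by
  simp only [lpNorm, eLpNorm_one_eq_lintegral_enorm, lintegral_count, enorm_eq_nnnorm]

/-- Forward direction. -/
lemma forward {γ : ℝ} {L : ℕ → ((ℕ → X) →ₗ[ℝ] X)} (hus : USinX γ L) :
    lplqStable L 1 ∞ := by
  obtain ⟨K, hK1, hK⟩ := hus
  intro f hf x hx
  -- summability
  rw [lpNorm_one_eq] at hf
  have hsum : Summable fun k => ‖f k‖₊ := ENNReal.tsum_coe_ne_top_iff_summable.mp hf.ne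
  have hsumR : Summable fun k => ‖f k‖ := by
    simpa [← NNReal.summable_coe] using hsum
  set S : ℝ := ∑' k, ‖f k‖ with hS
  have hSnn : 0 ≤ S := tsum_nonneg (fun k => norm_nonneg _)
  -- bound on each delta solution
  have hdelta : ∀ (k : ℕ) (n : ℕ), k < n → ‖sol L (dlt k (f k)) n‖ ≤ K * ‖f k‖ := by
    intro k n hkn
    have := hK (k+1) (dlt 0 (f k)) (memB_dlt γ 0 (f k)) (solZ L (dlt k (f k)))
      (isSolution_shift L k (f k)) n (by omega)
    rwa [solZ_coe, Bnorm_dlt_zero] at this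
  -- decomposition
  have hbound : ∀ n : ℕ, ‖sol L f n‖ ≤ K * S := by
    intro n
    have hdecomp : sol L f n = ∑ k ∈ Finset.range n, sol L (dlt k (f k)) n := by
      have h1 : sol L f n = sol L (∑ k ∈ Finset.range n, dlt k (f k)) n := by
        apply sol_congr
        intro j hj
        rw [Finset.sum_apply]
        simp only [dlt]
        rw [Finset.sum_ite_eq (Finset.range n) j (fun x => f x),
          if_pos (Finset.mem_range.mpr hj)]
      rw [h1]
      exact map_sum (solLM L n) (fun k => dlt k (f k)) (Finset.range n)
    rw [hdecomp]
    calc ‖∑ k ∈ Finset.range n, sol L (dlt k (f k)) n‖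
        ≤ ∑ k ∈ Finset.range n, ‖sol L (dlt k (f k)) n‖ := norm_sum_le _ _
      _ ≤ ∑ k ∈ Finset.range n, K * ‖f k‖ := by
          apply Finset.sum_le_sum
          intro k hk
          exact hdelta k n (Finset.mem_range.mp hk)
      _ = K * ∑ k ∈ Finset.range n, ‖f k‖ := by rw [Finset.mul_sum]
      _ ≤ K * S := by
          apply mul_le_mul_of_nonneg_left _ (by linarith)
          exact hsumR.sum_le_tsum _ (fun k _ => norm_nonneg _)
  -- conclude
  have hres : ∀ n : ℕ, ‖restrict x n‖ ≤ K * S := by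
    intro n
    rw [restrict, isSolution_unique hx n]
    exact hbound n
  have := eLpNorm_le_of_ae_bound (μ := Measure.count) (p := ∞)
    (f := restrict x) (C := K * S) (Filter.Eventually.of_forall hres)
  rw [lpNorm]
  exact lt_of_le_of_lt (by simpa using this) ENNReal.ofReal_lt_top


local instance factOne : Fact ((1:ℝ≥0∞) ≤ 1) := ⟨le_rfl⟩

lemma count_ae_forall {p : ℕ → Prop} (h : ∀ᵐ n ∂(Measure.count : Measure ℕ), p n) :
    ∀ n, p n := by
  rw [MeasureTheory.ae_iff] at h
  have h2 := Measure.count_eq_zero_iff.mp h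
  intro n
  by_contra hn
  exact Set.eq_empty_iff_forall_notMem.mp h2 n hn

lemma single_coe (k : ℕ) (v : X) :
    ⇑(lp.single 1 k v : lp (fun _ : ℕ => X) 1) = dlt k v := by
  funext j
  by_cases h : j = k <;> simp [lp.single_apply, dlt, h]

lemma single_norm (k : ℕ) (v : X) :
    ‖(lp.single 1 k v : lp (fun _ : ℕ => X) 1)‖ = ‖v‖ :=
  lp.norm_single (E := fun _ : ℕ => X) (p := 1) zero_lt_one k v

lemma sollp_bound {L : ℕ → ((ℕ → X) →ₗ[ℝ] X)} {d : ℕ} (hd : BoundedDelay L d) (n : ℕ) :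
    ∃ C : ℝ, 0 ≤ C ∧ ∀ m ≤ n, ∀ F : lp (fun _ : ℕ => X) 1, ‖sol L (⇑F) m‖ ≤ C * ‖F‖ := by
  induction n with
  | zero =>
    refine ⟨0, le_rfl, ?_⟩
    intro m hm F
    interval_cases m
    simp [sol_zero]
  | succ n ih =>
    obtain ⟨C, hC0, hC⟩ := ih
    obtain ⟨A, hA⟩ := hd n
    set SA : ℝ := ∑ k : Fin d, ‖A k‖ with hSA
    have hSA0 : 0 ≤ SA := Finset.sum_nonneg (fun k _ => norm_nonneg _)
    refine ⟨SA * C + C + 1, by positivity, ?_⟩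
    intro m hm F
    have hFn : 0 ≤ ‖F‖ := norm_nonneg _
    rcases Nat.lt_succ_iff_lt_or_eq.mp (Nat.lt_succ_of_le hm) with h | rfl
    · calc ‖sol L (⇑F) m‖ ≤ C * ‖F‖ := hC m (by omega) F
        _ ≤ (SA * C + C + 1) * ‖F‖ := by
            nlinarith [mul_nonneg (mul_nonneg hSA0 hC0) hFn]
    · rw [sol_succ, hA]
      have hψ : ∀ k : Fin d,
          ‖(fun j => if j ≤ n then sol L (⇑F) (n - j) else 0) (k : ℕ)‖ ≤ C * ‖F‖ := by
        intro k
        by_cases h : (k:ℕ) ≤ n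
        · simp only [if_pos h]
          exact hC (n - k) (by omega) F
        · simp only [if_neg h, norm_zero]
          positivity
      calc ‖(∑ k : Fin d, A k ((fun j => if j ≤ n then sol L (⇑F) (n - j) else 0) (k:ℕ)))
            + (⇑F) n‖
          ≤ ‖∑ k : Fin d, A k ((fun j => if j ≤ n then sol L (⇑F) (n - j) else 0) (k:ℕ))‖
            + ‖(⇑F) n‖ := norm_add_le _ _
        _ ≤ (∑ k : Fin d, ‖A k ((fun j => if j ≤ n then sol L (⇑F) (n - j) else 0) (k:ℕ))‖)
            + ‖F‖ := by
            gcongr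
            · exact norm_sum_le _ _
            · exact lp.norm_apply_le_norm one_ne_zero F n
        _ ≤ (∑ k : Fin d, ‖A k‖ * (C * ‖F‖)) + ‖F‖ := by
            gcongr with k
            calc ‖A k ((fun j => if j ≤ n then sol L (⇑F) (n - j) else 0) (k:ℕ))‖
                ≤ ‖A k‖ * ‖(fun j => if j ≤ n then sol L (⇑F) (n - j) else 0) (k:ℕ)‖ :=
                  (A k).le_opNorm _
              _ ≤ ‖A k‖ * (C * ‖F‖) := by
                  exact mul_le_mul_of_nonneg_left (hψ k) (norm_nonneg _)
        _ = SA * (C * ‖F‖) + ‖F‖ := by rw [← Finset.sum_mul]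
        _ ≤ (SA * C + C + 1) * ‖F‖ := by nlinarith [mul_nonneg hC0 hFn]

/-- The key uniform bound coming from `(ℓ¹,ℓ^∞)`-stability via Banach-Steinhaus. -/
lemma exists_uniform_bound {L : ℕ → ((ℕ → X) →ₗ[ℝ] X)} {d : ℕ} (hd : BoundedDelay L d)
    (hstab : lplqStable L 1 ∞) :
    ∃ M : ℝ, 1 ≤ M ∧ ∀ (F : lp (fun _ : ℕ => X) 1) (n : ℕ), ‖sol L (⇑F) n‖ ≤ M * ‖F‖ := by
  set T : ℕ → (lp (fun _ : ℕ => X) 1 →L[ℝ] X) := fun n =>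
    LinearMap.mkContinuousOfExistsBound
      { toFun := fun F => sol L (⇑F) n
        map_add' := fun F G => by
          simp only [lp.coeFn_add]; exact sol_add L (⇑F) (⇑G) n
        map_smul' := fun c F => by
          simp only [lp.coeFn_smul, RingHom.id_apply]; exact sol_smul L c (⇑F) n }
      (by obtain ⟨C, _, hC⟩ := sollp_bound hd n; exact ⟨C, fun F => hC n le_rfl F⟩)
    with hT
  have hTapp : ∀ (n : ℕ) (F : lp (fun _ : ℕ => X) 1), T n F = sol L (⇑F) n := fun n F => rfl
  have hptw : ∀ F : lp (fun _ : ℕ => X) 1, ∃ C, ∀ n : ℕ, ‖T n F‖ ≤ C := by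
    intro F
    have h1 : lpNorm 1 (⇑F) < ∞ := by
      rw [lpNorm_one_eq, lt_top_iff_ne_top, ENNReal.tsum_coe_ne_top_iff_summable]
      have hs := (lp.memℓp F).summable (p := 1) (by norm_num)
      simp only [ENNReal.toReal_one, Real.rpow_one] at hs
      rw [← NNReal.summable_coe]
      simpa [coe_nnnorm] using hs
    have h2 := hstab (⇑F) h1 (solZ L (⇑F)) (isSolution_solZ L (⇑F))
    rw [lpNorm, eLpNorm_exponent_top] at h2
    have h3 := count_ae_forall
      (enorm_ae_le_eLpNormEssSup (restrict (solZ L (⇑F))) Measure.count)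
    refine ⟨(eLpNormEssSup (restrict (solZ L (⇑F))) Measure.count).toReal, ?_⟩
    intro n
    rw [hTapp]
    have h4 := ENNReal.toReal_mono h2.ne (h3 n)
    rw [toReal_enorm] at h4
    have h5 : restrict (solZ L (⇑F)) n = sol L (⇑F) n := by
      rw [restrict, solZ_coe]
    rwa [h5] at h4
  obtain ⟨M0, hM0⟩ := banach_steinhaus hptw
  refine ⟨max M0 1, le_max_right _ _, ?_⟩
  intro F n
  calc ‖sol L (⇑F) n‖ = ‖T n F‖ := by rw [hTapp]
    _ ≤ ‖T n‖ * ‖F‖ := (T n).le_opNorm F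
    _ ≤ max M0 1 * ‖F‖ :=
        mul_le_mul_of_nonneg_right (le_trans (hM0 n) (le_max_left _ _)) (norm_nonneg _)


lemma coef_bound {L : ℕ → ((ℕ → X) →ₗ[ℝ] X)} {d : ℕ}
    (A : ℕ → Fin d → (X →L[ℝ] X)) (hA : ∀ n (φ : ℕ → X), L n φ = ∑ k : Fin d, A n k (φ k))
    {M : ℝ} (hM1 : 1 ≤ M)
    (hkey : ∀ (k : ℕ) (v : X) (n : ℕ), ‖sol L (dlt k v) n‖ ≤ M * ‖v‖) :
    ∀ K : ℕ, ∃ B : ℝ, 0 ≤ B ∧ ∀ (n : ℕ) (k : Fin d), (k : ℕ) < K → ∀ v : X,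
      ‖A n k v‖ ≤ B * ‖v‖ := by
  have hM0 : (0:ℝ) ≤ M := le_trans zero_le_one hM1
  intro K
  induction K with
  | zero => exact ⟨0, le_rfl, fun n k hk v => absurd hk (Nat.not_lt_zero _)⟩
  | succ K ih =>
    obtain ⟨B, hB0, hB⟩ := ih
    by_cases hKd : K < d
    · set kK : Fin d := ⟨K, hKd⟩ with hkK
      set C0 : ℝ := ∑ m ∈ Finset.range (K + 1), ‖A m kK‖ with hC0def
      have hC00 : 0 ≤ C0 := Finset.sum_nonneg (fun m _ => norm_nonneg _)
      refine ⟨B + C0 + (M + d * (B * M)), by positivity, ?_⟩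
      intro n k hk v
      have hv0 : (0:ℝ) ≤ ‖v‖ := norm_nonneg _
      have hBig : (0:ℝ) ≤ B + C0 + (M + d * (B * M)) := by positivity
      have hd0 : (0:ℝ) ≤ (d:ℝ) := Nat.cast_nonneg d
      have hq1 : (0:ℝ) ≤ (d:ℝ) * (B * M) * ‖v‖ :=
        mul_nonneg (mul_nonneg hd0 (mul_nonneg hB0 hM0)) hv0
      have hq2 : (0:ℝ) ≤ C0 * ‖v‖ := mul_nonneg hC00 hv0
      have hq3 : (0:ℝ) ≤ M * ‖v‖ := mul_nonneg hM0 hv0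
      have hq4 : (0:ℝ) ≤ B * ‖v‖ := mul_nonneg hB0 hv0
      have hq5 : (0:ℝ) ≤ B * (M * ‖v‖) := mul_nonneg hB0 hq3
      rcases Nat.lt_succ_iff_lt_or_eq.mp hk with hkK' | hkeq
      · calc ‖A n k v‖ ≤ B * ‖v‖ := hB n k hkK' v
          _ ≤ (B + C0 + (M + d * (B * M))) * ‖v‖ := by nlinarith
      · have hkk : k = kK := Fin.ext hkeq
        rw [hkk]
        rcases le_or_gt n K with hn | hn
        · -- finitely many initial times
          calc ‖A n kK v‖ ≤ ‖A n kK‖ * ‖v‖ := (A n kK).le_opNorm v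
            _ ≤ C0 * ‖v‖ := by
                apply mul_le_mul_of_nonneg_right _ hv0
                exact Finset.single_le_sum (f := fun m => ‖A m kK‖)
                  (fun m _ => norm_nonneg _) (Finset.mem_range.mpr (by omega))
            _ ≤ (B + C0 + (M + d * (B * M))) * ‖v‖ := by nlinarith
        · -- the main case: use a delta solution
          set g : ℕ → X := dlt (n - K - 1) v with hg
          have e1 : sol L g (n - K) = v := by
            rw [hg, show n - K = (n - K - 1) + 1 by omega]
            exact sol_dlt_succ L _ v
          have e2 : ∀ m ≤ n - K - 1, sol L g m = 0 := fun m hm =>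
            sol_dlt_eq_zero L _ v m hm
          have e3 : ∀ m, ‖sol L g m‖ ≤ M * ‖v‖ := fun m => hkey _ v m
          -- expand sol at n+1
          have hgn : g n = 0 := by
            simp only [hg, dlt]
            rw [if_neg (by omega)]
          have hsucc : sol L g (n + 1)
              = ∑ j : Fin d, A n j ((fun i => if i ≤ n then sol L g (n - i) else 0) (j:ℕ)) := by
            rw [sol_succ, hA n, hgn, add_zero]
          set ψ : ℕ → X := fun i => if i ≤ n then sol L g (n - i) else 0 with hψ
          have hψk : ψ (kK : ℕ) = v := by
            rw [hψ]
            simp only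
            rw [if_pos (by omega), show n - (kK:ℕ) = n - K by simp [hkK], e1]
          have hψle : ∀ j : Fin d, ‖ψ (j:ℕ)‖ ≤ M * ‖v‖ := by
            intro j
            rw [hψ]
            simp only
            split_ifs with h
            · exact e3 _
            · rw [norm_zero]; positivity
          have hψhigh : ∀ j : Fin d, K < (j:ℕ) → ψ (j:ℕ) = 0 := by
            intro j hj
            rw [hψ]
            simp only
            split_ifs with h
            · exact e2 _ (by omega)
            · rfl
          have hsplit : A n kK v = sol L g (n + 1) - ∑ j ∈ Finset.univ.erase kK, A n j (ψ (j:ℕ)) := by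
            rw [hsucc, ← Finset.add_sum_erase Finset.univ (fun j : Fin d => A n j (ψ (j:ℕ)))
              (Finset.mem_univ kK), hψk]
            abel
          rw [hsplit]
          have herase : ∀ j ∈ Finset.univ.erase kK, ‖A n j (ψ (j:ℕ))‖ ≤ B * (M * ‖v‖) := by
            intro j hj
            have hjk : j ≠ kK := Finset.ne_of_mem_erase hj
            rcases lt_trichotomy ((j:ℕ)) K with h | h | h
            · calc ‖A n j (ψ (j:ℕ))‖ ≤ B * ‖ψ (j:ℕ)‖ := hB n j h _
                _ ≤ B * (M * ‖v‖) := mul_le_mul_of_nonneg_left (hψle j) hB0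
            · exact absurd (Fin.ext (by simp [hkK, h])) hjk
            · rw [hψhigh j h, map_zero, norm_zero]; positivity
          calc ‖sol L g (n + 1) - ∑ j ∈ Finset.univ.erase kK, A n j (ψ (j:ℕ))‖
              ≤ ‖sol L g (n + 1)‖ + ‖∑ j ∈ Finset.univ.erase kK, A n j (ψ (j:ℕ))‖ :=
                norm_sub_le _ _
            _ ≤ M * ‖v‖ + ∑ j ∈ Finset.univ.erase kK, ‖A n j (ψ (j:ℕ))‖ := by
                gcongr
                · exact e3 _
                · exact norm_sum_le _ _
            _ ≤ M * ‖v‖ + ∑ j ∈ Finset.univ.erase kK, B * (M * ‖v‖) :=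
                add_le_add_right (Finset.sum_le_sum herase) _
            _ ≤ M * ‖v‖ + d * (B * (M * ‖v‖)) := by
                rw [Finset.sum_const, nsmul_eq_mul]
                have hcard : ((Finset.univ.erase kK).card : ℝ) ≤ (d : ℝ) := by
                  have := Finset.card_erase_le (a := kK) (s := (Finset.univ : Finset (Fin d)))
                  have h2 : (Finset.univ : Finset (Fin d)).card = d := Finset.card_univ.trans
                    (Fintype.card_fin d)
                  exact_mod_cast le_trans this (le_of_eq h2)
                nlinarith [mul_le_mul_of_nonneg_right hcard hq5]
            _ ≤ (B + C0 + (M + d * (B * M))) * ‖v‖ := by nlinarith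
    · -- K ≥ d : nothing new
      refine ⟨B, hB0, ?_⟩
      intro n k hk v
      exact hB n k (by omega) v


lemma reverse {γ : ℝ} {L : ℕ → ((ℕ → X) →ₗ[ℝ] X)} {d : ℕ} (hd : BoundedDelay L d)
    (hstab : lplqStable L 1 ∞) : USinX γ L := by
  obtain ⟨M, hM1, hM⟩ := exists_uniform_bound hd hstab
  have hM0 : (0:ℝ) ≤ M := le_trans zero_le_one hM1
  choose A hA using hd
  have hkey : ∀ (k : ℕ) (v : X) (n : ℕ), ‖sol L (dlt k v) n‖ ≤ M * ‖v‖ := by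
    intro k v n
    have := hM (lp.single 1 k v) n
    rwa [single_coe, single_norm] at this
  obtain ⟨B, hB0, hB⟩ := coef_bound A hA hM1 hkey d
  have hBall : ∀ (n : ℕ) (k : Fin d) (v : X), ‖A n k v‖ ≤ B * ‖v‖ :=
    fun n k v => hB n k k.isLt v
  set E : ℝ := Real.exp (|γ| * d) with hE
  have hE0 : (0:ℝ) < E := Real.exp_pos _
  have hd0 : (0:ℝ) ≤ (d:ℝ) := Nat.cast_nonneg d
  have hprod0 : (0:ℝ) ≤ M * ((d:ℝ) * ((d:ℝ) * (B * E))) :=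
    mul_nonneg hM0 (mul_nonneg hd0 (mul_nonneg hd0 (mul_nonneg hB0 hE0.le)))
  refine ⟨1 + M * ((d:ℝ) * ((d:ℝ) * (B * E))), by linarith, ?_⟩
  intro τ φ hφ x hx n hn
  have hBn0 : 0 ≤ Bnorm γ φ := Bnorm_nonneg hφ
  rcases Nat.eq_or_lt_of_le hn with heq | hlt
  · subst heq
    have h0 : x (τ:ℤ) = φ 0 := by simpa using hx.1 0
    rw [h0]
    have := norm_le_exp_mul_Bnorm hφ 0
    simp only [Nat.cast_zero, mul_zero, Real.exp_zero, one_mul] at this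
    nlinarith
  · -- main case: τ < n
    set g : ℕ → X := fun m => if τ ≤ m then
        ∑ k : Fin d, (if m - τ ≤ (k:ℕ) then A m k (φ (τ + (k:ℕ) - m)) else 0) else 0 with hgdef
    set y : ℤ → X := fun t => if (τ:ℤ) < t then x t else 0 with hydef
    have hy : IsSolution L g 0 0 y := by
      constructor
      · intro k
        rw [hydef]
        simp only
        rw [if_neg (by omega)]
        rfl
      · intro m _
        rcases lt_or_ge m τ with hmτ | hmτ
        · have h1 : y ((m:ℤ) + 1) = 0 := by rw [hydef]; simp only; rw [if_neg (by omega)]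
          have h2 : hist y (m:ℤ) = (0 : ℕ → X) := by
            funext k
            show y ((m:ℤ) - k) = 0
            rw [hydef]; simp only; rw [if_neg (by omega)]
          have h3 : g m = 0 := by rw [hgdef]; simp only; rw [if_neg (by omega)]
          rw [h1, h2, h3, map_zero, add_zero]
        · have h1 : y ((m:ℤ) + 1) = x ((m:ℤ) + 1) := by
            rw [hydef]; simp only; rw [if_pos (by omega)]
          have h2 := hx.2 m hmτ
          have hxsplit : ∀ k : Fin d, x ((m:ℤ) - (k:ℕ)) = y ((m:ℤ) - (k:ℕ))
              + (if m - τ ≤ (k:ℕ) then φ (τ + (k:ℕ) - m) else 0) := by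
            intro k
            by_cases hc : m - τ ≤ (k:ℕ)
            · rw [if_pos hc, hydef]
              simp only
              rw [if_neg (by omega), zero_add,
                show (m:ℤ) - (k:ℕ) = (τ:ℤ) - ((τ + (k:ℕ) - m : ℕ) : ℤ) by omega, hx.1]
            · rw [if_neg hc, hydef]
              simp only
              rw [if_pos (by omega), add_zero]
          have hLx : L m (hist x (m:ℤ)) = L m (hist y (m:ℤ)) + g m := by
            rw [hA m (hist x (m:ℤ)), hA m (hist y (m:ℤ))]
            have hterm : ∀ k : Fin d, A m k (hist x (m:ℤ) (k:ℕ))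
                = A m k (hist y (m:ℤ) (k:ℕ))
                  + (if m - τ ≤ (k:ℕ) then A m k (φ (τ + (k:ℕ) - m)) else 0) := by
              intro k
              have hh : hist x (m:ℤ) (k:ℕ) = x ((m:ℤ) - (k:ℕ)) := rfl
              have hh2 : hist y (m:ℤ) (k:ℕ) = y ((m:ℤ) - (k:ℕ)) := rfl
              rw [hh, hh2, hxsplit k, map_add]
              congr 1
              split_ifs with hc
              · rfl
              · exact map_zero _
            rw [Finset.sum_congr rfl (fun k _ => hterm k), Finset.sum_add_distrib]
            congr 1
            rw [hgdef]
            simp only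
            rw [if_pos hmτ]
          rw [h1, h2, hLx]
          simp
    have hxy : x (n:ℤ) = sol L g n := by
      have huniq := isSolution_unique hy n
      have hyx : y (n:ℤ) = x (n:ℤ) := by
        rw [hydef]; simp only; rw [if_pos (by exact_mod_cast hlt)]
      rw [← hyx, huniq]
    set G : lp (fun _ : ℕ => X) 1 := ∑ m ∈ Finset.Ico τ (τ + d), lp.single 1 m (g m) with hG
    have hGcoe : ⇑G = g := by
      funext j
      rw [hG, lp.coeFn_sum, Finset.sum_apply]
      have hterm : ∀ m ∈ Finset.Ico τ (τ + d),
          (lp.single 1 m (g m) : lp (fun _ : ℕ => X) 1) j = if j = m then g m else 0 := by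
        intro m _
        rw [single_coe]
        rfl
      rw [Finset.sum_congr rfl hterm, Finset.sum_ite_eq (Finset.Ico τ (τ + d)) j g]
      by_cases hj : j ∈ Finset.Ico τ (τ + d)
      · rw [if_pos hj]
      · rw [if_neg hj]
        rw [Finset.mem_Ico] at hj
        push_neg at hj
        have hgj : g j = 0 := by
          rw [hgdef]
          simp only
          by_cases h1 : τ ≤ j
          · rw [if_pos h1]
            apply Finset.sum_eq_zero
            intro k _
            have hjd : τ + d ≤ j := hj h1
            have : ¬ (j - τ ≤ (k:ℕ)) := by have := k.isLt; omega
            rw [if_neg this]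
          · rw [if_neg h1]
        rw [hgj]
    have hEB : ∀ j : ℕ, j ≤ d → ‖φ j‖ ≤ E * Bnorm γ φ := by
      intro j hjd
      refine le_trans (norm_le_exp_mul_Bnorm hφ j) ?_
      apply mul_le_mul_of_nonneg_right _ hBn0
      rw [hE]
      apply Real.exp_le_exp.mpr
      calc γ * j ≤ |γ| * j := mul_le_mul_of_nonneg_right (le_abs_self γ) (Nat.cast_nonneg j)
        _ ≤ |γ| * d := mul_le_mul_of_nonneg_left (by exact_mod_cast hjd) (abs_nonneg γ)
    have hterm0 : (0:ℝ) ≤ B * (E * Bnorm γ φ) := mul_nonneg hB0 (mul_nonneg hE0.le hBn0)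
    have hgbound : ∀ m, ‖g m‖ ≤ (d:ℝ) * (B * (E * Bnorm γ φ)) := by
      intro m
      have hrhs0 : (0:ℝ) ≤ (d:ℝ) * (B * (E * Bnorm γ φ)) := mul_nonneg hd0 hterm0
      rw [hgdef]
      simp only
      split_ifs with h1
      · refine le_trans (norm_sum_le _ _) ?_
        have hb : ∀ k : Fin d, ‖if m - τ ≤ (k:ℕ) then A m k (φ (τ + (k:ℕ) - m)) else 0‖
            ≤ B * (E * Bnorm γ φ) := by
          intro k
          split_ifs with hc
          · refine le_trans (hBall m k _) ?_
            apply mul_le_mul_of_nonneg_left _ hB0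
            apply hEB
            have := k.isLt
            omega
          · rw [norm_zero]; exact hterm0
        refine le_trans (Finset.sum_le_sum (fun k _ => hb k)) ?_
        rw [Finset.sum_const, Finset.card_univ, Fintype.card_fin, nsmul_eq_mul]
      · rw [norm_zero]; exact hrhs0
    have hGnorm : ‖G‖ ≤ (d:ℝ) * ((d:ℝ) * (B * (E * Bnorm γ φ))) := by
      rw [hG]
      refine le_trans (norm_sum_le _ _) ?_
      have hb : ∀ m ∈ Finset.Ico τ (τ + d),
          ‖(lp.single 1 m (g m) : lp (fun _ : ℕ => X) 1)‖ ≤ (d:ℝ) * (B * (E * Bnorm γ φ)) := by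
        intro m _
        rw [single_norm]
        exact hgbound m
      refine le_trans (Finset.sum_le_sum hb) ?_
      rw [Finset.sum_const, Nat.card_Ico, nsmul_eq_mul, show τ + d - τ = d by omega]
    calc ‖x (n:ℤ)‖ = ‖sol L (⇑G) n‖ := by rw [hxy, hGcoe]
      _ ≤ M * ‖G‖ := hM G n
      _ ≤ M * ((d:ℝ) * ((d:ℝ) * (B * (E * Bnorm γ φ)))) :=
          mul_le_mul_of_nonneg_left hGnorm hM0
      _ = (M * ((d:ℝ) * ((d:ℝ) * (B * E)))) * Bnorm γ φ := by ring
      _ ≤ (1 + M * ((d:ℝ) * ((d:ℝ) * (B * E)))) * Bnorm γ φ :=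
          mul_le_mul_of_nonneg_right (by linarith) hBn0

/-- Corollary 4.6: for systems with bounded delay of order `d`,
uniform stability in `X` w.r.t. `B^γ` ⟺ `(ℓ^1,ℓ^∞)`-stability. -/
theorem statement4 (γ : ℝ) (L : ℕ → ((ℕ → X) →ₗ[ℝ] X)) (d : ℕ)
    (hd : BoundedDelay L d) :
    USinX γ L ↔ lplqStable L 1 ∞ := by
  constructor
  · intro h
    exact forward h
  · intro h
    exact reverse hd h

end BP
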